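/- arXiv:2603.25632 — 9 statements merged into one kernel-verified Lean document; each statement's English description precedes it below -/
import Mathlib

section
/- Let A be a *-ring and q an idempotent such that qq*q = rq for some central element r. Then rqq* = r*qq* and r²q = rr*q. -/
/-- in a `*`-ring, if `q` is idempotent and `q q* q = r q` with `r`
central, then `r q q* = r* q q*` and `r² q = r r* q`. -/
theorem stmt_2 {A : Type*} [Ring A] [StarRing A] (q r : A)
    (hq : q * q = q) (hr : r ∈ Subring.center A)
    (hqr : q * star q * q = r * q) :
    r * (q * star q) = star r * (q * star q) ∧ r ^ 2 * q = r * star r * q := by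
  have hc : ∀ g : A, g * r = r * g := Subring.mem_center_iff.mp hr
  have hc' : ∀ g : A, g * star r = star r * g := by
    intro g
    have := congrArg star (hc (star g))
    simpa [star_mul] using this.symm
  -- star of hqr
  have h2 : star q * q * star q = star q * star r := by
    have := congrArg star hqr
    simpa [star_mul, mul_assoc] using this
  have h1 : r * (q * star q) = star r * (q * star q) := by
    calc r * (q * star q) = (r * q) * star q := by rw [mul_assoc]
      _ = (q * star q * q) * star q := by rw [hqr]
      _ = q * (star q * q * star q) := by noncomm_ring
      _ = q * (star q * star r) := by rw [h2]
      _ = q * (star r * star q) := by rw [hc' (star q)]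
      _ = star r * (q * star q) := by rw [← mul_assoc, hc' q, mul_assoc]
  refine ⟨h1, ?_⟩
  calc r ^ 2 * q = r * (r * q) := by rw [sq, mul_assoc]
    _ = r * (q * star q * q) := by rw [hqr]
    _ = (r * (q * star q)) * q := by noncomm_ring
    _ = (star r * (q * star q)) * q := by rw [h1]
    _ = star r * (q * star q * q) := by noncomm_ring
    _ = star r * (r * q) := by rw [hqr]
    _ = r * star r * q := by rw [← mul_assoc, ← hc' r]
end

section
/- Let A be a *-ring, q an idempotent with qq*q = rq for central r, and a ∈ A with qa + aq = a. Define L_q(a) := 2[a*, qq*q] + [qa*q, q*]. Then q L_q(a) + L_q(a) q = L_q(a), i.e., L_q(a) is again a tangent vector at q. -/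
/-- The operator `L_q(a) = 2[a*, q q* q] + [q a* q, q*]`. -/
def Lq {A : Type*} [Ring A] [StarRing A] (q a : A) : A :=
  2 * (star a * (q * star q * q) - (q * star q * q) * star a) +
    ((q * star a * q) * star q - star q * (q * star a * q))

/-- `L_q(a)` is again a tangent vector at `q`. -/
theorem stmt_3 {A : Type*} [Ring A] [StarRing A] (q r a : A)
    (hq : q * q = q) (hr : r ∈ Subring.center A)
    (hqr : q * star q * q = r * q) (ha : q * a + a * q = a) :
    q * Lq q a + Lq q a * q = Lq q a := by
  have hr' : ∀ x : A, x * r = r * x := fun x => (Subring.mem_center_iff.mp hr x)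
  have hrc : ∀ x y : A, x * (r * y) = r * (x * y) := by
    intro x y; rw [← mul_assoc, hr', mul_assoc]
  have hq2 : ∀ x : A, q * (q * x) = q * x := by
    intro x; rw [← mul_assoc, hq]
  have hqr' : ∀ x : A, q * (star q * (q * x)) = r * (q * x) := by
    intro x; rw [← mul_assoc, ← mul_assoc, hqr, mul_assoc]
  simp only [Lq, two_mul, hqr, mul_add, add_mul, mul_sub, sub_mul, mul_assoc, hrc, hq2, hqr', hq]
  abel
end

section
/- Let A be a *-ring, q an idempotent with qq*q = rq for central r, and a ∈ A with qa + aq = a. With L_q(a) := 2[a*, qq*q] + [qa*q, q*], one has L_q²(a) = −4r³ a. -/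
/-- `L_q²(a) = -4 r³ a`. -/
theorem stmt_4 {A : Type*} [Ring A] [StarRing A] (q r a : A)
    (hq : q * q = q) (hr : r ∈ Subring.center A)
    (hqr : q * star q * q = r * q) (ha : q * a + a * q = a) :
    Lq q (Lq q a) = -(4 * r ^ 3 * a) := by
  have hc : ∀ x : A, x * r = r * x := fun x => Subring.mem_center_iff.mp hr x
  have hst : ∀ x : A, x * star r = star r * x := by
    intro x
    have h : star r * x = x * star r := by
      simpa [star_mul, star_star] using congrArg star (hc (star x))
    exact h.symm
  have movr : ∀ x y : A, x * (r * y) = r * (x * y) := fun x y => by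
    rw [← mul_assoc, hc, mul_assoc]
  have movt : ∀ x y : A, x * (star r * y) = star r * (x * y) := fun x y => by
    rw [← mul_assoc, hst, mul_assoc]
  have hss : star q * star q = star q := by
    simpa [star_mul] using congrArg star hq
  have hsqs : star q * q * star q = star r * star q := by
    have h := congrArg star hqr
    simp only [star_mul, star_star] at h
    linear_combination (norm := noncomm_ring) h + hst (star q)
  have hqaq : q * a * q = 0 := by
    linear_combination (norm := noncomm_ring) q * ha * q - hq * a * q - q * a * hq
  have h1 : r * (star q * q) = star r * (star q * q) := by
    linear_combination (norm := noncomm_ring) hsqs * q - star q * hqr - hc (star q) * q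
  have h2 : r * (q * star q) = star r * (q * star q) := by
    linear_combination (norm := noncomm_ring) q * hsqs - hqr * star q + hst q * star q
  have h3 : r * (r * q) = r * (star r * q) := by
    linear_combination (norm := noncomm_ring) q * h1 - r * hqr - hc q * (star q * q) +
      hst q * (star q * q) + star r * hqr - hst r * q
  have h4 : star r * (star r * star q) = r * (star r * star q) := by
    linear_combination (norm := noncomm_ring) - (star r * hsqs) - hst (star q) * (q * star q) -
      star q * h2 + hc (star q) * (q * star q) + r * hsqs
  unfold Lq
  simp only [star_add, star_sub, star_mul, star_star, star_ofNat]
  linear_combination (norm := (simp only [mul_assoc, movr q, movr (star q), movr a,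
      movr (star r), movt q, movt (star q), movt a, hc q, hc (star q), hc a, hc (star r),
      hst q, hst (star q), hst a]; noncomm_ring))
      - 2 * h1 * a * star q * q
      - 2 * q * star q * a * h1
      + 2 * star q * a * h1
      - 2 * star r * h1 * a
      + 4 * star r * a * h1
      + 4 * r * a * h1
      - 2 * h3 * a * star q
      - 2 * star q * a * h3
      - 2 * h4 * a
      - 2 * q * a * h4
      - 2 * star r * star r * star q * ha
      + 2 * r * q * star q * ha * star q
      - 4 * r * q * star q * ha * star q * q
      + 2 * r * star q * ha * star q * q
      - 2 * r * star q * q * ha * star q * q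
      + 2 * r * star r * star q * ha
      + 4 * r * r * ha * star q * q
      + 4 * r * r * q * star q * ha
      - 4 * r * r * r * ha
      + hq * star q * a * star q * q * star q
      - q * star q * a * star q * hq * star q
      - star q * hq * star q * a * star q * q
      - 2 * star q * a * star q * hq * star q * q
      + star r * star q * a * star q * hq
      - 2 * r * hq * star q * a * star q
      + 2 * r * star q * hq * a * star q * q
      + 2 * r * star q * hqaq * star q * q
      + 4 * hqr * a * star q * q * star q
      - 2 * hqr * q * star q * a * star q
      + 2 * hqr * star q * a * q * star q
      + 2 * hqr * star q * a * star q * q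
      - 4 * hqr * star q * q * star q * a
      + 4 * star r * star q * a * hqr
      - 2 * r * hqr * a * star q
      + 4 * r * hqr * a * star q * q
      - 4 * r * hqr * star q * a
      + 4 * r * q * star q * a * hqr
      - 2 * r * star q * a * hqr
      - 4 * r * r * hqr * a
      - 4 * r * r * a * hqr
      + 4 * hsqs * a * q * star q * q
      - hsqs * a * star q * q
      + hsqs * a * star q * q * q
      - 2 * hsqs * q * star q * a * q
      - 4 * a * hsqs * q * star q * q
      - 2 * q * a * hsqs * q * star q
      + 2 * q * star q * a * hsqs * q
      - 2 * star q * a * hsqs * q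
      + 2 * star q * q * a * hsqs * q
      - 2 * star r * hsqs * a * q
      - 4 * star r * a * hsqs * q
      - 2 * star r * q * a * hsqs
      + 4 * r * q * a * hsqs
end

section
/- Let A be a *-ring, q an idempotent with qq*q = rq for central r, and a ∈ A with qa + aq = a. Then for every central element s, L_q(sa) = s* L_q(a), where L_q(a) := 2[a*, qq*q] + [qa*q, q*]. -/
/-- `L_q(s a) = s* L_q(a)` for central `s`. -/
theorem stmt_5 {A : Type*} [Ring A] [StarRing A] (q r a s : A)
    (hq : q * q = q) (hr : r ∈ Subring.center A)
    (hqr : q * star q * q = r * q) (ha : q * a + a * q = a)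
    (hs : s ∈ Subring.center A) :
    Lq q (s * a) = star s * Lq q a := by
  have hs' : ∀ x : A, x * s = s * x := Subring.mem_center_iff.mp hs
  have hc : ∀ x : A, star s * x = x * star s := fun x => by
    calc star s * x = star (star x * s) := by rw [star_mul, star_star]
      _ = star (s * star x) := by rw [hs']
      _ = x * star s := by rw [star_mul, star_star]
  have hc' : ∀ x y : A, star s * (x * y) = x * (star s * y) := fun x y => by
    rw [← mul_assoc, hc, mul_assoc]
  simp only [Lq, star_mul, mul_add, mul_sub, add_mul, sub_mul, mul_assoc, hc', hc]
end

section
/- Let A be a ring and q an idempotent such that the map Z(A) → qAq, r ↦ rq, is bijective (q is a rank-1 projection). If a ∈ A satisfies qa + aq = a, then for every x ∈ A[ε]/(ε²), the element (q+εa)x(q+εa) lies in Z(A[ε]/(ε²))·(q+εa); i.e., q+εa is again a rank-1 projection in the dual numbers over A. -/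
open TrivSqZeroExt

/-- if `q` is a rank-1 projection (the map `Z(A) → qAq`, `r ↦ rq`,
is a bijection) and `a` is tangent at `q`, then for every dual number `x`,
`(q+εa) x (q+εa)` lies in `Z(A[ε]/(ε²))·(q+εa)`: there are central `r, s` with
`(q+εa) x (q+εa) = (r+εs)(q+εa)`. -/
theorem stmt_6 {A : Type*} [Ring A] (q a : A)
    (hq : q * q = q)
    (hinj : ∀ r s : A, r ∈ Subring.center A → s ∈ Subring.center A →
      r * q = s * q → r = s)
    (hsurj : ∀ x : A, ∃ r ∈ Subring.center A, q * x * q = r * q)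
    (ha : q * a + a * q = a) :
    ∀ x : DualNumber A, ∃ r s : A, r ∈ Subring.center A ∧ s ∈ Subring.center A ∧
      (inl q + inr a) * x * (inl q + inr a) =
        (inl r + inr s) * (inl q + inr a) := by
  intro x
  obtain ⟨r, hr, hrq⟩ := hsurj x.fst
  obtain ⟨s₁, hs₁, hs₁q⟩ := hsurj x.snd
  obtain ⟨s₂, hs₂, hs₂q⟩ := hsurj (x.fst * a)
  obtain ⟨s₃, hs₃, hs₃q⟩ := hsurj (a * x.fst)
  refine ⟨r, s₁ + s₂ + s₃, hr, add_mem (add_mem hs₁ hs₂) hs₃, ?_⟩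
  have hrcomm : r * a = a * r := ((Subring.mem_center_iff.mp hr) a).symm
  ext
  · simpa [mul_assoc] using hrq
  · simp only [snd_mul, fst_mul, fst_add, snd_add, fst_inl, snd_inl, fst_inr, snd_inr,
      smul_eq_mul, MulOpposite.op_smul, MulOpposite.op_mul, op_smul_eq_mul,
      add_zero, zero_add, mul_zero, zero_mul]
    have h1 : q * x.fst * a = q * x.fst * (q * a) + s₂ * q := by
      rw [← hs₂q]
      nth_rewrite 1 [← ha]
      noncomm_ring
    have h2 : a * x.fst * q = s₃ * q + a * (q * x.fst * q) := by
      rw [← hs₃q]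
      nth_rewrite 1 [← ha]
      noncomm_ring
    have hra : r * a = q * x.fst * (q * a) + a * (q * x.fst * q) := by
      calc r * a = r * (q * a + a * q) := by rw [ha]
        _ = (r * q) * a + (a * r) * q := by rw [← hrcomm]; noncomm_ring
        _ = (r * q) * a + a * (r * q) := by noncomm_ring
        _ = q * x.fst * (q * a) + a * (q * x.fst * q) := by rw [← hrq]; noncomm_ring
    rw [add_mul (q * x.snd) (a * x.fst) q, hs₁q, h1, h2, hra, add_mul, add_mul]
    abel
end

section
/- Let A be a ring, q an idempotent, and a, b, c ∈ A each satisfying the tangency condition qx + xq = x. Then ρ(abc) = 0 for any cyclic trace ρ, and consequently ρ(a[b,c]) − ρ(b[a,c]) + ρ(c[a,b]) = 0. -/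
/-- for tangent vectors `a, b, c` at an idempotent `q` and a cyclic
trace `ρ`, `ρ(abc) = 0`, and consequently
`ρ(a[b,c]) − ρ(b[a,c]) + ρ(c[a,b]) = 0`. -/
theorem stmt_9 {A : Type*} [Ring A] (ρ : A →+ A) (q a b c : A)
    (hcyc : ∀ x y, ρ (x * y) = ρ (y * x))
    (hq : q * q = q)
    (ha : q * a + a * q = a) (hb : q * b + b * q = b) (hc : q * c + c * q = c) :
    ρ (a * b * c) = 0 ∧
      ρ (a * (b * c - c * b)) - ρ (b * (a * c - c * a)) +
        ρ (c * (a * b - b * a)) = 0 := by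
  -- a product of three tangent elements is tangent
  have tan3 : ∀ x y z : A, q * x + x * q = x → q * y + y * q = y →
      q * z + z * q = z → q * (x * y * z) + (x * y * z) * q = x * y * z := by
    intro x y z hx hy hz
    have exq : x * q = x - q * x := eq_sub_of_add_eq' hx
    have ezq : q * z = z - z * q := eq_sub_of_add_eq hz
    have h2 : x * y * z = (x * y * z + x * y * z) -
        (q * (x * y * z) + (x * y * z) * q) := by
      calc x * y * z = x * (q * y + y * q) * z := by rw [hy]
        _ = (x * q) * (y * z) + (x * y) * (q * z) := by noncomm_ring
        _ = (x - q * x) * (y * z) + (x * y) * (z - z * q) := by rw [exq, ezq]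
        _ = (x * y * z + x * y * z) - (q * (x * y * z) + (x * y * z) * q) := by
            noncomm_ring
    rw [eq_sub_iff_add_eq] at h2
    exact add_left_cancel h2
  -- ρ vanishes on tangent elements
  have rho_tan : ∀ w : A, q * w + w * q = w → ρ w = 0 := by
    intro w hw
    have hw0 : q * w * q = 0 := by
      have h : q * w * q + q * w * q = q * w * q := by
        calc q * w * q + q * w * q = (q * q) * (w * q) + (q * w) * (q * q) := by
              rw [hq]; noncomm_ring
          _ = q * (q * w + w * q) * q := by noncomm_ring
          _ = q * w * q := by rw [hw]
      simpa using h
    have h1 : ρ (q * w) = 0 := by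
      have e : q * w = q * (q * w) := by rw [← mul_assoc, hq]
      rw [e, hcyc q (q * w), mul_assoc, ← mul_assoc, hw0]
      simp
    have h2 : ρ (w * q) = 0 := by
      have e : w * q = (w * q) * q := by rw [mul_assoc, hq]
      rw [e, hcyc (w * q) q]
      rw [show q * (w * q) = 0 from by rw [← mul_assoc]; exact hw0]
      simp
    calc ρ w = ρ (q * w + w * q) := by rw [hw]
      _ = ρ (q * w) + ρ (w * q) := map_add ρ _ _
      _ = 0 := by rw [h1, h2, add_zero]
  have key : ∀ x y z : A, q * x + x * q = x → q * y + y * q = y →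
      q * z + z * q = z → ρ (x * y * z) = 0 := fun x y z hx hy hz =>
    rho_tan _ (tan3 x y z hx hy hz)
  refine ⟨key a b c ha hb hc, ?_⟩
  have e1 : a * (b * c - c * b) = a * b * c - a * c * b := by noncomm_ring
  have e2 : b * (a * c - c * a) = b * a * c - b * c * a := by noncomm_ring
  have e3 : c * (a * b - b * a) = c * a * b - c * b * a := by noncomm_ring
  rw [e1, e2, e3, map_sub, map_sub, map_sub,
    key a b c ha hb hc, key a c b ha hc hb, key b a c hb ha hc,
    key b c a hb hc ha, key c a b hc ha hb, key c b a hc hb ha]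
  simp
end

section
/- Let R be a commutative ring and q ∈ M_n(R) an idempotent matrix whose image is a rank-1 projective R-module. Then for all x ∈ M_n(R), qxq = Tr(qx)·q. -/
/-- if `q ∈ Mₙ(R)` is an idempotent whose image is a rank-1
projective module (equivalently, by the paper's characterization, `Tr q = 1`
and all 2×2 minors of `q` vanish), then `q x q = Tr(qx) q` for all `x`. -/
theorem stmt_11 {R : Type*} [CommRing R] {n : ℕ}
    (q : Matrix (Fin n) (Fin n) R)
    (hq : q * q = q) (htr : q.trace = 1)
    (hminor : ∀ i j k l, q i k * q j l = q i l * q j k) :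
    ∀ x : Matrix (Fin n) (Fin n) R, q * x * q = (q * x).trace • q := by
  intro x
  ext i j
  simp only [Matrix.mul_apply, Matrix.trace, Matrix.diag, Matrix.smul_apply, smul_eq_mul,
    Finset.sum_mul, Finset.mul_sum]
  apply Finset.sum_congr rfl
  intro l _
  apply Finset.sum_congr rfl
  intro k _
  linear_combination x k l * hminor i l k j
end

section
/- Let R be a commutative ring and q ∈ M_n(R) an idempotent. Then im(q) is a rank-1 projective R-module if and only if Tr(q) = 1 and all 2×2 minors of q vanish. -/
/-!
Write `M = im q`. If `M ⊗ N ≃ R`, then `M` is invertible, so every endomorphism of `M` is a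
scalar; for `v ↦ q E_{kl} v` this gives `q E_{kl} q = c_{kl} q`, and comparing entries and traces
yields `q_{lk} q_{ij} = Tr q · q_{ik} q_{lj}`, in particular `(1 - Tr q) q_{ab}² = 0`. Since
`M = I • M` for the ideal `I` generated by the entries of `q`, and `M` is finitely generated and
faithful, Nakayama gives `I = R`; hence `Tr q = 1` and the minors vanish.

Conversely, vanishing minors say `x_j • q_{·i} = q_{ji} • x` for `x ∈ im q`, and with this the dot
product `im q ⊗ im qᵀ → R` is inverse to `1 ↦ ∑ᵢ q_{·i} ⊗ q_{i·}`, because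
`∑_{i,j} q_{ji} q_{ij} = Tr q² = Tr q = 1`.
-/

open Matrix TensorProduct

section Invertible

variable {R M : Type*} [CommRing R] [AddCommGroup M] [Module R M]

theorem Module.Invertible.exists_eq_smul [Module.Invertible R M] (f : Module.End R M) :
    ∃ r : R, ∀ x, f x = r • x := by
  obtain ⟨r, rfl⟩ := (Module.Invertible.toModuleEnd_bijective R M).surjective f
  exact ⟨r, fun _ => rfl⟩

theorem Ideal.eq_top_of_top_le_smul [Module.Finite R M] [FaithfulSMul R M] {I : Ideal R}
    (h : (⊤ : Submodule R M) ≤ I • ⊤) : I = ⊤ := by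
  obtain ⟨r, hr, hr0⟩ := Submodule.exists_sub_one_mem_and_smul_eq_zero_of_fg_of_le_smul I ⊤
    Module.Finite.fg_top h
  obtain rfl : r = 0 :=
    FaithfulSMul.eq_of_smul_eq_smul fun x : M => by rw [hr0 x trivial, zero_smul]
  rwa [zero_sub, neg_mem_iff, ← Ideal.eq_top_iff_one] at hr

end Invertible

namespace Matrix

variable {R : Type*} [CommRing R] {n : Type*} [Fintype n] {q : Matrix n n R}

theorem mulVec_eq_self_of_mem_range (hq : q * q = q) {v : n → R}
    (hv : v ∈ LinearMap.range q.mulVecLin) : q *ᵥ v = v := by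
  obtain ⟨u, rfl⟩ := hv
  simp [mulVec_mulVec, hq]

theorem sum_sum_mul_eq_trace (hq : q * q = q) : ∑ i, ∑ j, q j i * q i j = q.trace := by
  conv_rhs => rw [← hq]
  simp [trace, mul_apply, mul_comm]

theorem exists_mul_mul_eq_smul [Module.Invertible R (LinearMap.range q.mulVecLin)]
    (A : Matrix n n R) : ∃ c : R, q * A * q = c • q := by
  obtain ⟨c, hc⟩ := Module.Invertible.exists_eq_smul
    (q.mulVecLin.rangeRestrict ∘ₗ A.mulVecLin ∘ₗ (LinearMap.range q.mulVecLin).subtype)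
  refine ⟨c, ext_iff_mulVec.2 fun v => ?_⟩
  simpa [mulVec_mulVec, Matrix.mul_assoc, smul_mulVec] using
    congrArg Subtype.val (hc (q.mulVecLin.rangeRestrict v))

theorem trace_eq_one_and_minors_eq_zero_of_span_eq_top
    (h : ∀ i j k l, q l k * q i j = q.trace * (q i k * q l j))
    (hspan : Ideal.span (Set.range fun p : n × n => q p.1 p.2) = ⊤) :
    q.trace = 1 ∧ ∀ i j k l, q i k * q j l = q i l * q j k := by
  have ht : q.trace = 1 := by
    have hker : Ideal.span ((· ^ 2) '' Set.range fun p : n × n => q p.1 p.2) ≤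
        LinearMap.ker (LinearMap.mulLeft R (1 - q.trace)) := by
      refine Ideal.span_le.2 ?_
      rintro _ ⟨_, ⟨⟨a, b⟩, rfl⟩, rfl⟩
      simp only [SetLike.mem_coe, LinearMap.mem_ker, LinearMap.mulLeft_apply]
      linear_combination h a b b a
    have h1 := hker (Ideal.span_pow_eq_top _ hspan 2 ▸ Submodule.mem_top (x := 1))
    simp only [LinearMap.mem_ker, LinearMap.mulLeft_apply, mul_one, sub_eq_zero] at h1
    exact h1.symm
  exact ⟨ht, fun i j k l => by linear_combination h j l k i + q j k * q i l * ht⟩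

variable [DecidableEq n]

theorem eq_sum_smul_rangeRestrict_single (hq : q * q = q) (x : LinearMap.range q.mulVecLin) :
    x = ∑ j, (x : n → R) j • q.mulVecLin.rangeRestrict (Pi.single j 1) := by
  ext a
  conv_lhs => rw [← mulVec_eq_self_of_mem_range hq x.2]
  simp [mulVec, dotProduct, mul_comm]

theorem mul_single_mul_apply (k l i j : n) :
    (q * single k l (1 : R) * q) i j = q i k * q l j := by
  simp [mul_apply, single_apply, ite_and]

theorem mul_mul_eq_trace_mul_mul (hq : q * q = q)
    (h : ∀ k l, ∃ c : R, q * single k l 1 * q = c • q) (i j k l : n) :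
    q l k * q i j = q.trace * (q i k * q l j) := by
  obtain ⟨c, hc⟩ := h k l
  have hentry : q i k * q l j = c * q i j := by
    simpa [mul_single_mul_apply] using congrFun (congrFun hc i) j
  have htrace : q l k = c * q.trace := by
    simpa [trace_mul_cycle, hq, trace_mul_single] using congrArg trace hc
  linear_combination q i j * htrace - q.trace * hentry

theorem span_entries_eq_top [Module.Invertible R (LinearMap.range q.mulVecLin)]
    (hq : q * q = q) : Ideal.span (Set.range fun p : n × n => q p.1 p.2) = ⊤ := by
  refine Ideal.eq_top_of_top_le_smul (M := LinearMap.range q.mulVecLin) fun x _ => ?_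
  rw [eq_sum_smul_rangeRestrict_single hq x]
  refine Submodule.sum_mem _ fun j _ => Submodule.smul_mem_smul ?_ Submodule.mem_top
  rw [← mulVec_eq_self_of_mem_range hq x.2]
  exact Ideal.sum_mem _ fun k _ => Ideal.mul_mem_right _ _ (Ideal.subset_span ⟨(j, k), rfl⟩)

theorem trace_eq_one_and_minors_eq_zero [Module.Invertible R (LinearMap.range q.mulVecLin)]
    (hq : q * q = q) : q.trace = 1 ∧ ∀ i j k l, q i k * q j l = q i l * q j k :=
  trace_eq_one_and_minors_eq_zero_of_span_eq_top
    (mul_mul_eq_trace_mul_mul hq fun _ _ => exists_mul_mul_eq_smul _) (span_entries_eq_top hq)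

theorem smul_rangeRestrict_single (hq : q * q = q)
    (hm : ∀ i j k l, q i k * q j l = q i l * q j k) (x : LinearMap.range q.mulVecLin) (i j : n) :
    (x : n → R) j • q.mulVecLin.rangeRestrict (Pi.single i 1) = q j i • x := by
  have hx : ∀ b, (x : n → R) b = ∑ k, q b k * (x : n → R) k := fun b =>
    (congrFun (mulVec_eq_self_of_mem_range hq x.2) b).symm
  ext a
  simp only [SetLike.val_smul, Pi.smul_apply, smul_eq_mul, LinearMap.codRestrict_apply,
    mulVecLin_apply, mulVec_single_one, col_apply]
  rw [hx j, hx a, Finset.sum_mul, Finset.mul_sum]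
  refine Finset.sum_congr rfl fun k _ => ?_
  linear_combination (x : n → R) k * hm a j i k

theorem dotProduct_smul_sum_tmul (hq : q * q = q) (ht : q.trace = 1)
    (hm : ∀ i j k l, q i k * q j l = q i l * q j k)
    (x : LinearMap.range q.mulVecLin) (y : LinearMap.range qᵀ.mulVecLin) :
    ((x : n → R) ⬝ᵥ y) • ∑ i, q.mulVecLin.rangeRestrict (Pi.single i 1) ⊗ₜ[R]
      qᵀ.mulVecLin.rangeRestrict (Pi.single i 1) = x ⊗ₜ y := by
  have hqT : qᵀ * qᵀ = qᵀ := by rw [← transpose_mul, hq]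
  have hmT : ∀ i j k l, qᵀ i k * qᵀ j l = qᵀ i l * qᵀ j k := fun i j k l => by
    simp only [transpose_apply]; linear_combination hm k l i j
  calc _ = ∑ i, ∑ j, ((x : n → R) j • q.mulVecLin.rangeRestrict (Pi.single i 1)) ⊗ₜ[R]
          ((y : n → R) j • qᵀ.mulVecLin.rangeRestrict (Pi.single i 1)) := by
        simp only [dotProduct, Finset.sum_smul, Finset.smul_sum, smul_tmul_smul]
    _ = ∑ i, ∑ j, (q j i • x) ⊗ₜ[R] (q i j • y) := by
        simp only [smul_rangeRestrict_single hq hm, smul_rangeRestrict_single hqT hmT,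
          transpose_apply]
    _ = x ⊗ₜ y := by
        simp only [smul_tmul_smul, ← Finset.sum_smul, sum_sum_mul_eq_trace hq, ht, one_smul]

noncomputable def tensorRangeTransposeEquiv (hq : q * q = q) (ht : q.trace = 1)
    (hm : ∀ i j k l, q i k * q j l = q i l * q j k) :
    LinearMap.range q.mulVecLin ⊗[R] LinearMap.range qᵀ.mulVecLin ≃ₗ[R] R :=
  LinearEquiv.ofLinearMap
    (lift ((dotProductBilin R R).compl₁₂ (LinearMap.range q.mulVecLin).subtype
      (LinearMap.range qᵀ.mulVecLin).subtype))
    (LinearMap.toSpanSingleton R _ (∑ i, q.mulVecLin.rangeRestrict (Pi.single i 1) ⊗ₜ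
      qᵀ.mulVecLin.rangeRestrict (Pi.single i 1)))
    (LinearMap.ext_ring <| by simp [map_sum, dotProduct, sum_sum_mul_eq_trace hq, ht])
    (TensorProduct.ext' fun x y => by simpa using dotProduct_smul_sum_tmul hq ht hm x y)

end Matrix

/-- an idempotent matrix `q ∈ Mₙ(R)` has rank-1 projective
(i.e. invertible) image if and only if `Tr q = 1` and all 2×2 minors of `q`
vanish. -/
theorem stmt_12 {R : Type} [CommRing R] {n : ℕ}
    (q : Matrix (Fin n) (Fin n) R) (hq : q * q = q) :
    (∃ (N : Type) (_ : AddCommGroup N) (_ : Module R N),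
        Nonempty (TensorProduct R (LinearMap.range q.mulVecLin) N ≃ₗ[R] R)) ↔
      q.trace = 1 ∧ ∀ i j k l, q i k * q j l = q i l * q j k := by
  constructor
  · rintro ⟨N, _, _, ⟨e⟩⟩
    have := Module.Invertible.left e
    exact trace_eq_one_and_minors_eq_zero hq
  · rintro ⟨ht, hm⟩
    exact ⟨_, _, _, ⟨tensorRangeTransposeEquiv hq ht hm⟩⟩
end

section
/- Let H be a finite-dimensional real inner product space. The map F : H∖{0} → ℝ ⊕ H ⊕ Sym(H), F(x) = ‖x‖^{1/2}(1, ‖x‖^{-1}x, ‖x‖^{-2} x x*), is an isometric immersion when the codomain carries the metric (5/2)g_ℝ ⊕ g_H ⊕ (1/2)g_{L(H)} and the domain carries g_x(v,w) = (2/‖x‖)⟨v,w⟩ − (1/‖x‖³)⟨v,x⟩⟨x,w⟩. Concretely: the Fréchet derivative DF_x satisfies (5/2)(D(‖·‖^{1/2})_x v)(D(‖·‖^{1/2})_x w) + ⟨D(‖·‖^{-1/2}·)_x v, D(‖·‖^{-1/2}·)_x w⟩ + (1/2)⟨D(‖·‖^{-3/2}(··*))_x v, D(‖·‖^{-3/2}(··*))_x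 w⟩_{HS} = g_x(v,w) for all v, w ∈ H. -/
/-!
Each component of `F` has the form `‖y‖ ^ p • P y` with `P y ∈ {1, y, y y*}`, so by the product
rule its derivative at `x` in direction `v` is `‖x‖ ^ p • DP_x v + p ‖x‖ ^ (p - 2) ⟪x, v⟫ • P x`.
The Hilbert–Schmidt products of the rank-one operators that appear reduce to inner products,
`Tr((a b*)(c d*)) = ⟪b, c⟫⟪d, a⟫`, and what is left is an identity between Laurent polynomials
in `√‖x‖`.
-/

open RealInnerProductSpace InnerProductSpace

section
variable {E F : Type*} [NormedAddCommGroup E] [InnerProductSpace ℝ E]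
  [NormedAddCommGroup F] [NormedSpace ℝ F]

theorem hasFDerivAt_norm_rpow_of_ne_zero {x : E} (hx : x ≠ 0) (p : ℝ) :
    HasFDerivAt (fun y : E ↦ ‖y‖ ^ p) ((p * ‖x‖ ^ (p - 2)) • innerSL ℝ x) x := by
  convert! (hasStrictFDerivAt_norm_sq x).hasFDerivAt.rpow_const (p := p / 2) (by simp [hx])
    using 0
  simp_rw [← Real.rpow_natCast_mul (norm_nonneg _), ← Nat.cast_smul_eq_nsmul ℝ, smul_smul]
  ring_nf

theorem fderiv_norm_rpow_apply {x : E} (hx : x ≠ 0) (p : ℝ) (v : E) :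
    fderiv ℝ (fun y : E ↦ ‖y‖ ^ p) x v = p * ‖x‖ ^ (p - 2) * ⟪x, v⟫ := by
  simp [(hasFDerivAt_norm_rpow_of_ne_zero hx p).fderiv]

theorem fderiv_norm_rpow_smul_apply {x : E} (hx : x ≠ 0) (p : ℝ) {f : E → F}
    (hf : DifferentiableAt ℝ f x) (v : E) :
    fderiv ℝ (fun y ↦ ‖y‖ ^ p • f y) x v =
      ‖x‖ ^ p • fderiv ℝ f x v + (p * ‖x‖ ^ (p - 2) * ⟪x, v⟫) • f x := by
  rw [fderiv_fun_smul (hasFDerivAt_norm_rpow_of_ne_zero hx p).differentiableAt hf]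
  simp [fderiv_norm_rpow_apply hx]

theorem exists_hasFDerivAt_rankOne_self (x : E) :
    ∃ L : E →L[ℝ] E →L[ℝ] E, HasFDerivAt (fun y : E ↦ rankOne ℝ y y) L x ∧
      ∀ v, L v = rankOne ℝ v x + rankOne ℝ x v := by
  -- `rankOne ℝ` is typed as conjugate-linear in its second slot; `B` is its flip, typed as
  -- an ℝ-bilinear map so that the bilinear product rule applies.
  let B : E →L[ℝ] E →L[ℝ] E →L[ℝ] E := (ContinuousLinearMap.smulRightL ℝ E E).comp (innerSL ℝ)
  refine ⟨_, B.hasFDerivAt_of_bilinear (hasFDerivAt_id x) (hasFDerivAt_id x), fun v ↦ ?_⟩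
  ext
  simp [B, rankOne_def, add_comm]

theorem differentiableAt_rankOne_self (x : E) :
    DifferentiableAt ℝ (fun y : E ↦ rankOne ℝ y y) x :=
  let ⟨_, hL, _⟩ := exists_hasFDerivAt_rankOne_self x
  hL.differentiableAt

theorem fderiv_rankOne_self_apply (x v : E) :
    fderiv ℝ (fun y : E ↦ rankOne ℝ y y) x v = rankOne ℝ v x + rankOne ℝ x v := by
  obtain ⟨L, hL, hLv⟩ := exists_hasFDerivAt_rankOne_self x
  rw [hL.fderiv, hLv]

end

theorem trace_rankOne_comp_rankOne {𝕜 E : Type*} [RCLike 𝕜] [NormedAddCommGroup E]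
    [InnerProductSpace 𝕜 E] [FiniteDimensional 𝕜 E] (a b c d : E) :
    LinearMap.trace 𝕜 E ((rankOne 𝕜 a b).toLinearMap ∘ₗ (rankOne 𝕜 c d).toLinearMap) =
      inner 𝕜 b c * inner 𝕜 d a := by
  rw [← ContinuousLinearMap.toLinearMap_comp, rankOne_comp_rankOne,
    ContinuousLinearMap.toLinearMap_smul, map_smul, trace_rankOne, smul_eq_mul]

theorem Real.rpow_eq_sqrt_zpow {r a : ℝ} (hr : 0 ≤ r) {n : ℤ} (h : 2 * a = n) :
    r ^ a = √r ^ n := by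
  rw [Real.sqrt_eq_rpow, ← Real.rpow_intCast, ← Real.rpow_mul hr, ← h]
  ring_nf

/-- the map `F(x) = ‖x‖^{1/2}(1, ‖x‖⁻¹x, ‖x‖⁻²xx*)` is an
isometric immersion from `(H∖{0}, g)` into
`(ℝ ⊕ H ⊕ Sym(H), (5/2)g_ℝ ⊕ g_H ⊕ (1/2)g_{L(H)})`, where
`g_x(v,w) = (2/‖x‖)⟨v,w⟩ − (1/‖x‖³)⟨v,x⟩⟨x,w⟩` and the inner product on
operators is the Hilbert–Schmidt one, `⟨S,T⟩ = Tr(S∘T)`. -/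
theorem stmt_16 {H : Type*} [NormedAddCommGroup H] [InnerProductSpace ℝ H]
    [FiniteDimensional ℝ H] (x : H) (hx : x ≠ 0) (v w : H) :
    (5 / 2) * (fderiv ℝ (fun y : H => ‖y‖ ^ ((1 : ℝ) / 2)) x v *
        fderiv ℝ (fun y : H => ‖y‖ ^ ((1 : ℝ) / 2)) x w) +
      ⟪fderiv ℝ (fun y : H => (‖y‖ ^ (-(1 : ℝ) / 2)) • y) x v,
        fderiv ℝ (fun y : H => (‖y‖ ^ (-(1 : ℝ) / 2)) • y) x w⟫ +
      (1 / 2) * LinearMap.trace ℝ H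
        ((fderiv ℝ
            (fun y : H => (‖y‖ ^ (-(3 : ℝ) / 2)) • ((innerSL ℝ y).smulRight y))
            x v).toLinearMap ∘ₗ
          (fderiv ℝ
            (fun y : H => (‖y‖ ^ (-(3 : ℝ) / 2)) • ((innerSL ℝ y).smulRight y))
            x w).toLinearMap) =
      (2 / ‖x‖) * ⟪v, w⟫ - (1 / ‖x‖ ^ 3) * (⟪v, x⟫ * ⟪x, w⟫) := by
  simp only [← rankOne_def, fderiv_norm_rpow_apply hx,
    fderiv_norm_rpow_smul_apply hx _ differentiableAt_fun_id,
    fderiv_norm_rpow_smul_apply hx _ (differentiableAt_rankOne_self x),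
    fderiv_rankOne_self_apply, fderiv_fun_id, ContinuousLinearMap.id_apply]
  simp only [ContinuousLinearMap.toLinearMap_add, ContinuousLinearMap.toLinearMap_smul,
    LinearMap.add_comp, LinearMap.comp_add, LinearMap.smul_comp, LinearMap.comp_smul, map_add,
    map_smul, trace_rankOne_comp_rankOne, inner_add_left, inner_add_right, real_inner_smul_left,
    real_inner_smul_right, smul_eq_mul]
  have hx' : 0 ≤ ‖x‖ := norm_nonneg x
  rw [Real.rpow_eq_sqrt_zpow hx' (a := 1 / 2 - 2) (n := -3) (by norm_num),
    Real.rpow_eq_sqrt_zpow hx' (a := -1 / 2 - 2) (n := -5) (by norm_num),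
    Real.rpow_eq_sqrt_zpow hx' (a := -3 / 2 - 2) (n := -7) (by norm_num),
    Real.rpow_eq_sqrt_zpow hx' (a := -1 / 2) (n := -1) (by norm_num),
    Real.rpow_eq_sqrt_zpow hx' (a := -3 / 2) (n := -3) (by norm_num),
    real_inner_self_eq_norm_sq, real_inner_comm x v, real_inner_comm x w, real_inner_comm v w]
  have ht : √‖x‖ ≠ 0 := by positivity
  have hxt : ‖x‖ = √‖x‖ ^ 2 := (Real.sq_sqrt hx').symm
  generalize √‖x‖ = t at ht hxt ⊢
  rw [hxt]
  field_simp
  ring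
end
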